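/- Let A : X → ℝ be θ-Hölder for some θ ∈ (0,1]. For every x ∈ X the following are equivalent: (i) x ∈ Ω(A); (ii) φ_A(x, x) = 0; (iii) h_A(x, x) = 0. -/

import Mathlib

open MeasureTheory Filter Topology

section GLT

variable {X : Type*} [MetricSpace X]

/-- A transitive expanding dynamical system: a continuous, surjective, open,
several-to-one map whose inverse branches are uniformly contracting, and which
is topologically transitive. -/
structure IsExpandingTransitive (T : X → X) : Prop where
  cont : Continuous T
  surj : Function.Surjective T
  isOpenMap : IsOpenMap T
  finite_preimages : ∀ x : X, {y : X | T y = x}.Finite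
  transitive : ∀ U V : Set X, IsOpen U → IsOpen V → U.Nonempty → V.Nonempty →
    ∃ n : ℕ, ((T^[n]) ⁻¹' U ∩ V).Nonempty
  contracting : ∃ lam : ℝ, 0 < lam ∧ lam < 1 ∧ ∃ δ : ℝ, 0 < δ ∧
    ∀ x y : X, dist x y ≤ δ → dist x y ≤ lam * dist (T x) (T y)

/-- `Abar` is the ergodic minimizing value of `A`: the minimum (attained) of
`∫ A dμ` over all `T`-invariant Borel probability measures `μ`. -/
def IsErgMinValue [MeasurableSpace X] (T : X → X) (A : X → ℝ) (Abar : ℝ) : Prop :=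
  (∃ μ : Measure X, IsProbabilityMeasure μ ∧ MeasurePreserving T μ μ ∧ (∫ x, A x ∂μ) = Abar) ∧
  ∀ μ : Measure X, IsProbabilityMeasure μ → MeasurePreserving T μ μ → Abar ≤ ∫ x, A x ∂μ

/-- `f` is θ-Hölder. -/
def IsThetaHolder (θ : ℝ) (f : X → ℝ) : Prop :=
  ∃ C : ℝ, 0 ≤ C ∧ ∀ x y : X, |f x - f y| ≤ C * dist x y ^ θ

/-- `u` is a (continuous) sub-action for `A` with ergodic minimizing value `Abar`. -/
def IsSubaction (T : X → X) (A : X → ℝ) (Abar : ℝ) (u : X → ℝ) : Prop :=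
  Continuous u ∧ ∀ x : X, u (T x) - u x + Abar ≤ A x

/-- The contact locus of a sub-action `u`. -/
def contactLocus (T : X → X) (A : X → ℝ) (Abar : ℝ) (u : X → ℝ) : Set X :=
  {x : X | A x = u (T x) - u x + Abar}

/-- The set `Ω(A)` of non-wandering points with respect to `A`. -/
def nonwanderingSet (T : X → X) (A : X → ℝ) (Abar : ℝ) : Set X :=
  {x : X | ∀ ε : ℝ, 0 < ε → ∃ k : ℕ, 1 ≤ k ∧ ∃ y : X,
    dist x y < ε ∧ dist x (T^[k] y) < ε ∧
    |∑ j ∈ Finset.range k, (A (T^[j] y) - Abar)| < ε}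

/-- `u` is a calibrated sub-action: `u x = min_{T y = x} [u y + A y - Abar]`,
the minimum being attained. -/
def IsCalibrated (T : X → X) (A : X → ℝ) (Abar : ℝ) (u : X → ℝ) : Prop :=
  Continuous u ∧ ∀ x : X,
    (∀ y : X, T y = x → u x ≤ u y + A y - Abar) ∧
    (∃ y : X, T y = x ∧ u x = u y + A y - Abar)

/-- `S_A^ε(x, x', k)`: infimum of Birkhoff sums of `A - Abar` over orbit segments of
length `k` starting within `ε` of `x` and ending within `ε` of `x'`
(`sInf ∅ = ⊤` in `EReal`). -/
noncomputable def birkhoffInf (T : X → X) (A : X → ℝ) (Abar : ℝ) (ε : ℝ) (x x' : X)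
    (k : ℕ) : EReal :=
  sInf {v : EReal | ∃ z : X, dist z x < ε ∧ dist (T^[k] z) x' < ε ∧
    v = ((∑ j ∈ Finset.range k, (A (T^[j] z) - Abar) : ℝ) : EReal)}

/-- The Mañé potential `φ_A(x, x') = lim_{ε→0} inf_{k ≥ 1} S_A^ε(x, x', k)`;
since the quantity is nonincreasing in `ε`, the limit as `ε → 0` is the
supremum over `ε > 0`. -/
noncomputable def manePotential (T : X → X) (A : X → ℝ) (Abar : ℝ) (x x' : X) : EReal :=
  ⨆ ε : {e : ℝ // 0 < e}, ⨅ k : {n : ℕ // 1 ≤ n}, birkhoffInf T A Abar ε.1 x x' k.1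

/-- The Peierls barrier `h_A(x, x') = lim_{ε→0} liminf_{k→∞} S_A^ε(x, x', k)`;
since the quantity is nonincreasing in `ε`, the limit as `ε → 0` is the
supremum over `ε > 0`. -/
noncomputable def peierlsBarrier (T : X → X) (A : X → ℝ) (Abar : ℝ) (x x' : X) : EReal :=
  ⨆ ε : {e : ℝ // 0 < e},
    Filter.liminf (fun k : ℕ => birkhoffInf T A Abar ε.1 x x' k) Filter.atTop

/-- `C` is an irreducible component of `Ω(A)`: an equivalence class of the
relation `x ∼ x' ↔ h_A(x, x') + h_A(x', x) = 0` on `Ω(A)`. -/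
def IsIrredComponent (T : X → X) (A : X → ℝ) (Abar : ℝ) (C : Set X) : Prop :=
  ∃ x ∈ nonwanderingSet T A Abar, C = {y ∈ nonwanderingSet T A Abar |
    peierlsBarrier T A Abar x y + peierlsBarrier T A Abar y x = 0}

/-- The θ-Hölder norm `‖f‖_θ = sup |f| + sup_{x ≠ y} |f x - f y| / d(x,y)^θ`. -/
noncomputable def holderNorm (θ : ℝ) (f : X → ℝ) : ℝ :=
  (⨆ x : X, |f x|) +
    ⨆ p : {p : X × X // p.1 ≠ p.2}, |f p.1.1 - f p.1.2| / dist p.1.1 p.1.2 ^ θ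

end GLT

/-!
An orbit segment that starts and ends `ε`-close to `x` is an almost closed loop. Because the
inverse branches of `T` contract, such a loop is shadowed by a periodic orbit (closing lemma); the
equidistribution on that periodic orbit is invariant, so its Birkhoff sum of `A - Ā` is
nonnegative, and Hölder continuity makes the two sums differ by `O(ε^θ)`. Hence short loops have
almost nonnegative sums, which gives `0 ≤ φ_A(x, x) ≤ h_A(x, x)` and shows that `φ_A(x, x) ≤ 0`
forces `x ∈ Ω(A)`. Conversely, a loop at a non-wandering point can be pulled back around itself
`m` times at a cost `O(m ε^θ)`, which produces arbitrarily long loops with small sums, so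
`h_A(x, x) ≤ 0`.
-/

open Function

section Expanding

variable {X : Type*} [MetricSpace X] {T : X → X} {lam δ ρ : ℝ}

theorem dist_le_pow_mul_dist_iterate
    (hc : ∀ x y : X, dist x y ≤ δ → dist x y ≤ lam * dist (T x) (T y)) (hlam : 0 ≤ lam)
    {n : ℕ} {a b : X} (h : ∀ t ≤ n, dist (T^[t] a) (T^[t] b) ≤ δ) :
    dist a b ≤ lam ^ n * dist (T^[n] a) (T^[n] b) := by
  induction n generalizing a b with
  | zero => simp
  | succ n ih =>
    have hT : dist (T a) (T b) ≤ lam ^ n * dist (T^[n] (T a)) (T^[n] (T b)) :=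
      ih fun t ht => by simpa only [iterate_succ_apply] using h (t + 1) (by omega)
    calc dist a b ≤ lam * dist (T a) (T b) := hc a b (h 0 (Nat.zero_le _))
      _ ≤ lam * (lam ^ n * dist (T^[n] (T a)) (T^[n] (T b))) := by gcongr
      _ = lam ^ (n + 1) * dist (T^[n + 1] a) (T^[n + 1] b) := by
        rw [iterate_succ_apply, iterate_succ_apply, pow_succ]; ring

theorem IsOpenMap.exists_ball_subset_image_ball [CompactSpace X] (hT : IsOpenMap T)
    (hcont : Continuous T) {ε : ℝ} (hε : 0 < ε) :
    ∃ ρ > 0, ∀ x, Metric.ball (T x) ρ ⊆ T '' Metric.ball x ε := by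
  let U : {r : ℝ // 0 < r} → Set X := fun r =>
    interior {x | Metric.ball (T x) r ⊆ T '' Metric.ball x ε}
  have hcover : Set.univ ⊆ ⋃ r, U r := by
    intro x _
    obtain ⟨r, hr, hball⟩ := Metric.isOpen_iff.1 (hT _ Metric.isOpen_ball) (T x)
      (Set.mem_image_of_mem T (Metric.mem_ball_self (half_pos hε)))
    -- for `x'` in this neighbourhood, `ball (T x') (r / 2) ⊆ ball (T x) r ⊆ T '' ball x (ε / 2)`
    refine Set.mem_iUnion.2 ⟨⟨r / 2, half_pos hr⟩, mem_interior.2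
      ⟨Metric.ball x (ε / 2) ∩ T ⁻¹' Metric.ball (T x) (r / 2), ?_,
        Metric.isOpen_ball.inter (Metric.isOpen_ball.preimage hcont),
        Metric.mem_ball_self (half_pos hε), Metric.mem_ball_self (half_pos hr)⟩⟩
    rintro x' ⟨hx', hTx'⟩ w hw
    obtain ⟨v, hv, rfl⟩ := hball (Metric.ball_subset_ball' (by
      rw [Set.mem_preimage, Metric.mem_ball] at hTx'; linarith) hw)
    refine ⟨v, ?_, rfl⟩
    rw [Metric.mem_ball] at hv hx' ⊢
    linarith [dist_triangle v x x', dist_comm x x']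
  have hdir : Directed (· ⊆ ·) U := fun r s =>
    ⟨⟨min r s, lt_min r.2 s.2⟩,
      interior_mono fun x hx => (Metric.ball_subset_ball (min_le_left _ _)).trans hx,
      interior_mono fun x hx => (Metric.ball_subset_ball (min_le_right _ _)).trans hx⟩
  obtain ⟨r, hr⟩ := isCompact_univ.elim_directed_cover U (fun _ => isOpen_interior) hcover hdir
  exact ⟨r, r.2, fun x => interior_subset (hr (Set.mem_univ x))⟩

def HasContractingBranches (T : X → X) (lam ρ : ℝ) : Prop :=
  ∀ x w, dist w (T x) < ρ → ∃ y, T y = w ∧ dist y x ≤ lam * dist w (T x)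

theorem exists_hasContractingBranches [CompactSpace X] (hT : IsOpenMap T) (hcont : Continuous T)
    (hδ : 0 < δ) (hc : ∀ x y : X, dist x y ≤ δ → dist x y ≤ lam * dist (T x) (T y)) :
    ∃ ρ > 0, HasContractingBranches T lam ρ := by
  obtain ⟨ρ, hρ, hball⟩ := hT.exists_ball_subset_image_ball hcont hδ
  refine ⟨ρ, hρ, fun x w hw => ?_⟩
  obtain ⟨y, hy, rfl⟩ := hball x hw
  exact ⟨y, rfl, hc y x (Metric.mem_ball.1 hy).le⟩

namespace HasContractingBranches

theorem exists_iterate_preimage (hb : HasContractingBranches T lam ρ) (hlam0 : 0 ≤ lam)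
    (hlam1 : lam ≤ 1) (k : ℕ) {x w : X} (hw : dist w (T^[k] x) < ρ) :
    ∃ y, T^[k] y = w ∧
      ∀ j ≤ k, dist (T^[j] y) (T^[j] x) ≤ lam ^ (k - j) * dist w (T^[k] x) := by
  induction k generalizing x with
  | zero => exact ⟨w, rfl, fun j hj => by simp [Nat.le_zero.1 hj]⟩
  | succ k ih =>
    rw [iterate_succ_apply] at hw ⊢
    obtain ⟨y', hy', hd'⟩ := ih hw
    have hy'x : dist y' (T x) ≤ lam ^ k * dist w (T^[k] (T x)) := by simpa using hd' 0 k.zero_le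
    have hlamk : lam ^ k * dist w (T^[k] (T x)) ≤ dist w (T^[k] (T x)) :=
      mul_le_of_le_one_left dist_nonneg (pow_le_one₀ hlam0 hlam1)
    obtain ⟨y, rfl, hd⟩ := hb x y' (hy'x.trans_lt (hlamk.trans_lt hw))
    refine ⟨y, hy', fun j hj => ?_⟩
    cases j with
    | zero =>
      calc dist y x ≤ lam * dist (T y) (T x) := hd
        _ ≤ lam * (lam ^ k * dist w (T^[k] (T x))) := by gcongr
        _ = _ := by rw [Nat.sub_zero, pow_succ]; ring
    | succ j =>
      simpa only [iterate_succ_apply, Nat.succ_sub_succ] using hd' j (by omega)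

theorem exists_loop_pullbacks (hb : HasContractingBranches T lam ρ) (hlam0 : 0 ≤ lam)
    (hlam1 : lam ≤ 1) {z : X} {k : ℕ} (hk : k ≠ 0) {B : ℝ} (hBρ : B ≤ ρ)
    (hz : dist (T^[k] z) z < (1 - lam) * B) :
    ∃ w : ℕ → X, w 0 = z ∧ (∀ m, T^[k] (w (m + 1)) = w m) ∧
      ∀ m, ∀ j ≤ k, dist (T^[j] (w (m + 1))) (T^[j] z) ≤ lam ^ (k - j) * B := by
  have hB : 0 < B := pos_of_mul_pos_right (dist_nonneg.trans_lt hz) (by linarith)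
  -- pulling back along the orbit of `z` is possible from anywhere `lam * B`-close to `z`
  have step : ∀ v, ∃ y, dist v z ≤ lam * B → T^[k] y = v ∧
      ∀ j ≤ k, dist (T^[j] y) (T^[j] z) ≤ lam ^ (k - j) * B := by
    intro v
    by_cases hv : dist v z ≤ lam * B
    · have hvk : dist v (T^[k] z) < B := by
        linarith [dist_triangle v z (T^[k] z), dist_comm z (T^[k] z)]
      obtain ⟨y, hy, hd⟩ := hb.exists_iterate_preimage hlam0 hlam1 k (hvk.trans_le hBρ)
      exact ⟨y, fun _ => ⟨hy, fun j hj => (hd j hj).trans (by gcongr)⟩⟩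
    · exact ⟨v, fun h => absurd h hv⟩
  choose g hg using step
  have hclose : ∀ m, dist (g^[m] z) z ≤ lam * B := by
    intro m
    induction m with
    | zero => simpa using mul_nonneg hlam0 hB.le
    | succ m ih =>
      rw [iterate_succ_apply']
      calc dist (g (g^[m] z)) z ≤ lam ^ k * B := by simpa using ((hg _ ih).2 0 k.zero_le)
        _ ≤ lam * B := by gcongr; exact pow_le_of_le_one hlam0 hlam1 hk
  refine ⟨fun m => g^[m] z, rfl, fun m => ?_, fun m => ?_⟩ <;>
    simp only [iterate_succ_apply']
  exacts [(hg _ (hclose m)).1, (hg _ (hclose m)).2]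

theorem exists_isPeriodicPt_shadowing [CompleteSpace X] (hb : HasContractingBranches T lam ρ)
    (hcont : Continuous T) (hc : ∀ x y : X, dist x y ≤ δ → dist x y ≤ lam * dist (T x) (T y))
    (hlam0 : 0 ≤ lam) (hlam : lam < 1)
    {z : X} {k : ℕ} (hk : k ≠ 0) {B : ℝ} (hBρ : B ≤ ρ) (hBδ : 2 * B ≤ δ)
    (hz : dist (T^[k] z) z < (1 - lam) * B) :
    ∃ p, IsPeriodicPt T k p ∧ ∀ j ≤ k, dist (T^[j] p) (T^[j] z) ≤ lam ^ (k - j) * B := by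
  obtain ⟨w, hw0, hwT, hwz⟩ := hb.exists_loop_pullbacks hlam0 hlam.le hk hBρ hz
  have hB : 0 ≤ B := nonneg_of_mul_nonneg_right (dist_nonneg.trans hz.le) (by linarith)
  have hwz' : ∀ m, ∀ j ≤ k, dist (T^[j] (w (m + 1))) (T^[j] z) ≤ B := fun m j hj =>
    (hwz m j hj).trans (mul_le_of_le_one_left hB (pow_le_one₀ hlam0 hlam.le))
  -- consecutive pullbacks shadow the same orbit segment, so expansivity contracts their distance
  have hstep : ∀ m, dist (w m) (w (m + 1)) ≤ B * lam ^ m := by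
    intro m
    induction m with
    | zero => simpa [hw0, dist_comm] using hwz' 0 0 k.zero_le
    | succ m ih =>
      have hexp := dist_le_pow_mul_dist_iterate (a := w (m + 1)) (b := w (m + 2)) hc hlam0
        (n := k) fun t ht => by
          linarith [dist_triangle_right (T^[t] (w (m + 1))) (T^[t] (w (m + 2))) (T^[t] z),
            hwz' m t ht, hwz' (m + 1) t ht]
      rw [hwT, hwT] at hexp
      calc dist (w (m + 1)) (w (m + 2)) ≤ lam ^ k * (B * lam ^ m) := hexp.trans (by gcongr)
        _ ≤ lam * (B * lam ^ m) := by gcongr; exact pow_le_of_le_one hlam0 hlam.le hk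
        _ = B * lam ^ (m + 1) := by ring
  obtain ⟨p, hp⟩ := cauchySeq_tendsto_of_complete (cauchySeq_of_le_geometric lam B hlam hstep)
  have hp' : Tendsto (fun m => w (m + 1)) atTop (𝓝 p) := hp.comp (tendsto_add_atTop_nat 1)
  refine ⟨p, tendsto_nhds_unique (((hcont.iterate k).tendsto p).comp hp') ?_, fun j hj => ?_⟩
  · simpa only [comp_def, hwT] using hp
  · exact le_of_tendsto (((hcont.iterate j).tendsto p).comp hp' |>.dist tendsto_const_nhds)
      (Eventually.of_forall fun m => hwz m j hj)

end HasContractingBranches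

end Expanding

section BirkhoffSums

variable {X : Type*} {T : X → X}

theorem sum_range_pow_sub_le {r : ℝ} (hr0 : 0 ≤ r) (hr1 : r < 1) (k : ℕ) :
    ∑ j ∈ Finset.range k, r ^ (k - j) ≤ r / (1 - r) := by
  have hreflect : ∑ j ∈ Finset.range k, r ^ (k - j) = ∑ i ∈ Finset.Ico 1 (k + 1), r ^ i := by
    rw [Finset.sum_Ico_eq_sum_range, Nat.add_sub_cancel, ← Finset.sum_range_reflect]
    exact Finset.sum_congr rfl fun j hj => by
      rw [Finset.mem_range] at hj; congr 1; omega
  simpa [hreflect] using geom_sum_Ico_le_of_lt_one (m := 1) (n := k + 1) hr0 hr1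

theorem abs_birkhoffSum_sub_le_of_holder [PseudoMetricSpace X] {g : X → ℝ} {C θ lam B : ℝ}
    (hg : ∀ x y, |g x - g y| ≤ C * dist x y ^ θ) (hC : 0 ≤ C) (hθ : 0 < θ)
    (hlam0 : 0 ≤ lam) (hlam1 : lam < 1) (hB : 0 ≤ B) {k : ℕ} {a b : X}
    (hab : ∀ j < k, dist (T^[j] a) (T^[j] b) ≤ lam ^ (k - j) * B) :
    |birkhoffSum T g k a - birkhoffSum T g k b| ≤ C * (lam ^ θ / (1 - lam ^ θ)) * B ^ θ := by
  have hr0 : 0 ≤ lam ^ θ := Real.rpow_nonneg hlam0 θ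
  have hr1 : lam ^ θ < 1 := Real.rpow_lt_one hlam0 hlam1 hθ
  have hterm : ∀ j < k, |g (T^[j] a) - g (T^[j] b)| ≤ C * B ^ θ * (lam ^ θ) ^ (k - j) := by
    intro j hj
    calc |g (T^[j] a) - g (T^[j] b)| ≤ C * (lam ^ (k - j) * B) ^ θ :=
          (hg _ _).trans (by gcongr; exact hab j hj)
      _ = C * B ^ θ * (lam ^ θ) ^ (k - j) := by
        rw [Real.mul_rpow (by positivity) hB, ← Real.rpow_natCast, ← Real.rpow_natCast,
          ← Real.rpow_mul hlam0, ← Real.rpow_mul hlam0, mul_comm θ]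
        ring
  calc |birkhoffSum T g k a - birkhoffSum T g k b|
      = |∑ j ∈ Finset.range k, (g (T^[j] a) - g (T^[j] b))| := by
        rw [birkhoffSum, birkhoffSum, Finset.sum_sub_distrib]
    _ ≤ ∑ j ∈ Finset.range k, C * B ^ θ * (lam ^ θ) ^ (k - j) :=
        (Finset.abs_sum_le_sum_abs _ _).trans
          (Finset.sum_le_sum fun j hj => hterm j (Finset.mem_range.1 hj))
    _ ≤ C * B ^ θ * (lam ^ θ / (1 - lam ^ θ)) := by
        rw [← Finset.mul_sum]; gcongr; exact sum_range_pow_sub_le hr0 hr1 k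
    _ = C * (lam ^ θ / (1 - lam ^ θ)) * B ^ θ := by ring

variable {k : ℕ} {w : ℕ → X}

theorem iterate_mul_eq_of_iterate_succ (hw : ∀ m, T^[k] (w (m + 1)) = w m) (m : ℕ) :
    T^[m * k] (w m) = w 0 := by
  induction m with
  | zero => rw [zero_mul, iterate_zero_apply]
  | succ m ih => rw [Nat.succ_mul, iterate_add_apply, hw, ih]

theorem birkhoffSum_mul_eq_of_iterate_succ {M : Type*} [AddCommMonoid M] (g : X → M)
    (hw : ∀ m, T^[k] (w (m + 1)) = w m) (m : ℕ) :
    birkhoffSum T g (m * k) (w m) = ∑ i ∈ Finset.range m, birkhoffSum T g k (w (i + 1)) := by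
  induction m with
  | zero => simp
  | succ m ih =>
    rw [Nat.succ_mul, add_comm, birkhoffSum_add, hw, ih, Finset.sum_range_succ, add_comm]

end BirkhoffSums

section OrbitMeasure

open scoped ENNReal

variable {α : Type*} [MeasurableSpace α] {T : α → α} {k : ℕ} {p : α}

noncomputable def orbitMeasure (T : α → α) (k : ℕ) (p : α) : Measure α :=
  (k : ℝ≥0∞)⁻¹ • ∑ j ∈ Finset.range k, Measure.dirac (T^[j] p)

theorem isProbabilityMeasure_orbitMeasure (hk : k ≠ 0) :
    IsProbabilityMeasure (orbitMeasure T k p) := by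
  constructor
  simp [orbitMeasure, ENNReal.inv_mul_cancel (Nat.cast_ne_zero.2 hk) (ENNReal.natCast_ne_top k)]

theorem measurePreserving_orbitMeasure (hT : Measurable T) (hp : IsPeriodicPt T k p) :
    MeasurePreserving T (orbitMeasure T k p) (orbitMeasure T k p) := by
  refine ⟨hT, ?_⟩
  have hshift : ∑ j ∈ Finset.range k, Measure.dirac (T^[j + 1] p)
      = ∑ j ∈ Finset.range k, Measure.dirac (T^[j] p) := by
    cases k with
    | zero => simp
    | succ n => rw [Finset.sum_range_succ, hp.eq, Finset.sum_range_succ', iterate_zero_apply]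
  rw [orbitMeasure, Measure.map_smul, ← Measure.mapₗ_apply_of_measurable hT, map_sum]
  simp only [Measure.mapₗ_apply_of_measurable hT, Measure.map_dirac' hT, ← iterate_succ_apply' T]
  rw [hshift]

theorem integral_orbitMeasure [MeasurableSingletonClass α] (f : α → ℝ) :
    ∫ x, f x ∂orbitMeasure T k p = (k : ℝ)⁻¹ * birkhoffSum T f k p := by
  rw [orbitMeasure, integral_smul_measure,
    integral_finsetSum_measure fun j _ => integrable_dirac enorm_lt_top]
  simp [birkhoffSum, integral_dirac]

theorem birkhoffSum_sub_nonneg_of_isPeriodicPt [MeasurableSingletonClass α] (hT : Measurable T)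
    {A : α → ℝ} {Abar : ℝ}
    (hmin : ∀ μ : Measure α, IsProbabilityMeasure μ → MeasurePreserving T μ μ → Abar ≤ ∫ x, A x ∂μ)
    (hk : k ≠ 0) (hp : IsPeriodicPt T k p) :
    0 ≤ birkhoffSum T (fun x => A x - Abar) k p := by
  have hAbar := hmin _ (isProbabilityMeasure_orbitMeasure hk) (measurePreserving_orbitMeasure hT hp)
  rw [integral_orbitMeasure, le_inv_mul_iff₀ (by positivity)] at hAbar
  simp only [birkhoffSum, Finset.sum_sub_distrib, Finset.sum_const, Finset.card_range,
    nsmul_eq_mul] at hAbar ⊢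
  linarith

end OrbitMeasure

section Loops

variable {X : Type*} [MetricSpace X] {T : X → X} {g : X → ℝ} {lam δ ρ θ : ℝ}

def LoopSumsAlmostNonneg (T : X → X) (g : X → ℝ) : Prop :=
  ∀ t > 0, ∃ ε > 0, ∀ k ≠ 0, ∀ z, dist (T^[k] z) z < ε → -t ≤ birkhoffSum T g k z

def LoopsRepeatable (T : X → X) (g : X → ℝ) : Prop :=
  ∀ m : ℕ, ∀ t > 0, ∃ ε > 0, ∀ k ≠ 0, ∀ z, dist (T^[k] z) z < ε →
    ∃ w, T^[m * k] w = z ∧ dist w z < t ∧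
      birkhoffSum T g (m * k) w ≤ m * birkhoffSum T g k z + t

theorem exists_pos_le_mul_rpow_le (hθ : 0 < θ) (K : ℝ) {r t : ℝ} (hr : 0 < r) (ht : 0 < t) :
    ∃ B, 0 < B ∧ B ≤ r ∧ K * B ^ θ ≤ t := by
  have hcont : Continuous fun B : ℝ => K * B ^ θ :=
    continuous_const.mul (Real.continuous_rpow_const hθ.le)
  have hlim : Tendsto (fun B : ℝ => K * B ^ θ) (𝓝 0) (𝓝 0) := by
    simpa [Real.zero_rpow hθ.ne'] using hcont.tendsto 0
  obtain ⟨B, hBt, hB⟩ := ((hlim.eventually (gt_mem_nhds ht)).filter_mono nhdsWithin_le_nhds |>.and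
    (Ioo_mem_nhdsGT hr)).exists
  exact ⟨B, hB.1, hB.2.le, hBt.le⟩

variable (hb : HasContractingBranches T lam ρ) (hρ : 0 < ρ) (hlam0 : 0 ≤ lam) (hlam1 : lam < 1)
  (hθ : 0 < θ) (hg : IsThetaHolder θ g)
include hb hρ hlam0 hlam1 hθ hg

theorem loopSumsAlmostNonneg [CompleteSpace X] (hcont : Continuous T) (hδ : 0 < δ)
    (hc : ∀ x y : X, dist x y ≤ δ → dist x y ≤ lam * dist (T x) (T y))
    (hper : ∀ k ≠ 0, ∀ p, IsPeriodicPt T k p → 0 ≤ birkhoffSum T g k p) :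
    LoopSumsAlmostNonneg T g := by
  intro t ht
  obtain ⟨C, hC, hCg⟩ := hg
  obtain ⟨B, hB, hBr, hBt⟩ :=
    exists_pos_le_mul_rpow_le hθ (C * (lam ^ θ / (1 - lam ^ θ))) (lt_min hρ (half_pos hδ)) ht
  refine ⟨(1 - lam) * B, by nlinarith, fun k hk z hz => ?_⟩
  obtain ⟨p, hp, hpz⟩ := hb.exists_isPeriodicPt_shadowing hcont hc hlam0 hlam1 hk
    (hBr.trans (min_le_left _ _)) (by linarith [min_le_right ρ (δ / 2)]) hz
  have hcmp := abs_le.1 (abs_birkhoffSum_sub_le_of_holder hCg hC hθ hlam0 hlam1 hB.le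
    fun j hj => hpz j hj.le)
  linarith [hper k hk p hp]

theorem loopsRepeatable : LoopsRepeatable T g := by
  intro m t ht
  obtain ⟨C, hC, hCg⟩ := hg
  obtain ⟨B, hB, hBr, hBt⟩ :=
    exists_pos_le_mul_rpow_le hθ (m * (C * (lam ^ θ / (1 - lam ^ θ)))) (lt_min hρ (half_pos ht)) ht
  refine ⟨(1 - lam) * B, by nlinarith, fun k hk z hz => ?_⟩
  obtain ⟨w, hw0, hwT, hwz⟩ :=
    hb.exists_loop_pullbacks hlam0 hlam1.le hk (hBr.trans (min_le_left _ _)) hz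
  have hblock : ∀ i, birkhoffSum T g k (w (i + 1)) ≤
      birkhoffSum T g k z + C * (lam ^ θ / (1 - lam ^ θ)) * B ^ θ := fun i => by
    linarith [(abs_le.1 (abs_birkhoffSum_sub_le_of_holder hCg hC hθ hlam0 hlam1 hB.le
      fun j hj => hwz i j hj.le)).2]
  refine ⟨w m, by rw [iterate_mul_eq_of_iterate_succ hwT, hw0], ?_, ?_⟩
  · cases m with
    | zero => simpa [hw0] using ht
    | succ m =>
      calc dist (w (m + 1)) z ≤ lam ^ k * B := by simpa using hwz m 0 k.zero_le
        _ ≤ B := mul_le_of_le_one_left hB.le (pow_le_one₀ hlam0 hlam1.le)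
        _ < t := by linarith [min_le_right ρ (t / 2)]
  · calc birkhoffSum T g (m * k) (w m)
        ≤ ∑ i ∈ Finset.range m, (birkhoffSum T g k z + C * (lam ^ θ / (1 - lam ^ θ)) * B ^ θ) := by
          rw [birkhoffSum_mul_eq_of_iterate_succ g hwT]
          exact Finset.sum_le_sum fun i _ => hblock i
      _ ≤ m * birkhoffSum T g k z + t := by
          rw [Finset.sum_const, Finset.card_range, nsmul_eq_mul, mul_add]
          linarith

end Loops

section Potentials

variable {X : Type*} [MetricSpace X] {T : X → X} {A : X → ℝ} {Abar ε : ℝ} {x x' : X} {k : ℕ}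

theorem birkhoffInf_le {z : X} (hz : dist z x < ε) (hTz : dist (T^[k] z) x' < ε) :
    birkhoffInf T A Abar ε x x' k ≤ ((birkhoffSum T (fun y => A y - Abar) k z : ℝ) : EReal) :=
  sInf_le ⟨z, hz, hTz, rfl⟩

theorem le_birkhoffInf {c : EReal} (h : ∀ z, dist z x < ε → dist (T^[k] z) x' < ε →
      c ≤ ((birkhoffSum T (fun y => A y - Abar) k z : ℝ) : EReal)) :
    c ≤ birkhoffInf T A Abar ε x x' k :=
  le_sInf fun _ ⟨z, hz, hTz, hv⟩ => hv ▸ h z hz hTz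

theorem exists_of_birkhoffInf_lt {c : EReal} (h : birkhoffInf T A Abar ε x x' k < c) :
    ∃ z, dist z x < ε ∧ dist (T^[k] z) x' < ε ∧
      ((birkhoffSum T (fun y => A y - Abar) k z : ℝ) : EReal) < c := by
  obtain ⟨_, ⟨z, hz, hTz, rfl⟩, hlt⟩ := sInf_lt_iff.1 h
  exact ⟨z, hz, hTz, hlt⟩

theorem manePotential_le_peierlsBarrier (T : X → X) (A : X → ℝ) (Abar : ℝ) (x x' : X) :
    manePotential T A Abar x x' ≤ peierlsBarrier T A Abar x x' :=
  iSup_mono fun ε => le_liminf_of_le (by isBoundedDefault) <|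
    (eventually_ge_atTop 1).mono fun k hk =>
      iInf_le (fun k : {n : ℕ // 1 ≤ n} => birkhoffInf T A Abar ε.1 x x' k.1) ⟨k, hk⟩

theorem manePotential_self_nonneg (hlow : LoopSumsAlmostNonneg T fun y => A y - Abar) :
    0 ≤ manePotential T A Abar x x := by
  refine EReal.ge_of_forall_gt_iff_ge.1 fun s hs => ?_
  obtain ⟨ε, hε, hloop⟩ := hlow (-s) (by simpa using hs)
  refine le_iSup_of_le ⟨ε / 2, half_pos hε⟩ <| le_iInf fun k => le_birkhoffInf fun z hz hTz => ?_
  have hzz : dist (T^[k.1] z) z < ε := by linarith [dist_triangle_right (T^[k.1] z) z x]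
  have hs' : s ≤ birkhoffSum T (fun y => A y - Abar) k.1 z := by
    simpa using hloop k.1 (by have := k.2; omega) z hzz
  exact_mod_cast hs'

theorem mem_nonwanderingSet_of_manePotential_self_nonpos
    (hlow : LoopSumsAlmostNonneg T fun y => A y - Abar) (h : manePotential T A Abar x x ≤ 0) :
    x ∈ nonwanderingSet T A Abar := by
  intro ε hε
  obtain ⟨ε', hε', hloop⟩ := hlow (ε / 2) (half_pos hε)
  set e := min (ε' / 2) ε
  have he : 0 < e := lt_min (half_pos hε') hε
  have hinf : ⨅ k : {n : ℕ // 1 ≤ n}, birkhoffInf T A Abar e x x k.1 < (ε : EReal) :=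
    (le_iSup_of_le (ι := {e : ℝ // 0 < e}) ⟨e, he⟩ le_rfl |>.trans h).trans_lt
      (by exact_mod_cast hε)
  obtain ⟨⟨k, hk⟩, hlt⟩ := iInf_lt_iff.1 hinf
  obtain ⟨z, hz, hTz, hS⟩ := exists_of_birkhoffInf_lt hlt
  have hzz : dist (T^[k] z) z < ε' := by
    linarith [dist_triangle_right (T^[k] z) z x, min_le_left (ε' / 2) ε]
  have hlow' := hloop k (by omega) z hzz
  have hS' : birkhoffSum T (fun y => A y - Abar) k z < ε := by exact_mod_cast hS
  refine ⟨k, hk, z, ?_, ?_,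
    abs_lt.2 ⟨(by linarith : -ε < birkhoffSum T (fun y => A y - Abar) k z), hS'⟩⟩ <;>
    rw [dist_comm] <;> linarith [min_le_right (ε' / 2) ε]

theorem peierlsBarrier_self_nonpos (hrep : LoopsRepeatable T fun y => A y - Abar)
    (hx : x ∈ nonwanderingSet T A Abar) : peierlsBarrier T A Abar x x ≤ 0 := by
  refine EReal.le_of_forall_lt_iff_le.1 fun t ht => iSup_le fun ε => ?_
  have ht : 0 < t := by exact_mod_cast ht
  refine liminf_le_of_frequently_le' (frequently_atTop.2 fun K => ?_)
  -- repeat a short loop at `x` often enough to exceed length `K`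
  set m := K + 1
  obtain ⟨e, he, hcat⟩ := hrep m (min (ε.1 / 2) (t / 2)) (lt_min (half_pos ε.2) (half_pos ht))
  set e' := min (e / 2) (min (ε.1 / 2) (t / (2 * m)))
  have he' : 0 < e' := lt_min (half_pos he) (lt_min (half_pos ε.2) (by positivity))
  obtain ⟨k, hk, y, hxy, hxTy, hS⟩ := hx e' he'
  have hyy : dist (T^[k] y) y < e := by
    linarith [dist_triangle_left (T^[k] y) y x, min_le_left (e / 2) (min (ε.1 / 2) (t / (2 * m)))]
  obtain ⟨w, hwy, hdw, hSw⟩ := hcat k (by omega) y hyy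
  have he'ε : e' ≤ ε.1 / 2 := (min_le_right _ _).trans (min_le_left _ _)
  have hme' : m * e' ≤ t / 2 := by
    have : e' ≤ t / (2 * m) := (min_le_right _ _).trans (min_le_right _ _)
    have hm : (m : ℝ) ≠ 0 := by positivity
    calc (m : ℝ) * e' ≤ m * (t / (2 * m)) := by gcongr
      _ = t / 2 := by field_simp
  have hSy : birkhoffSum T (fun y => A y - Abar) k y ≤ e' := (le_abs_self _).trans hS.le
  refine ⟨m * k, (Nat.le_succ K).trans (Nat.le_mul_of_pos_right m hk),
    (birkhoffInf_le (z := w) ?_ ?_).trans ?_⟩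
  · rw [dist_comm] at hxy
    linarith [dist_triangle w y x, min_le_left (ε.1 / 2) (t / 2)]
  · rw [hwy, dist_comm]
    linarith
  · have : birkhoffSum T (fun y => A y - Abar) (m * k) w ≤ t := by
      nlinarith [min_le_right (ε.1 / 2) (t / 2)]
    exact_mod_cast this

end Potentials

theorem nonwandering_iff_potential_zero_general {X : Type*} [MetricSpace X] [CompactSpace X]
    [MeasurableSpace X] [BorelSpace X]
    (T : X → X) (hT : IsExpandingTransitive T)
    (θ : ℝ) (hθ0 : 0 < θ)
    (A : X → ℝ) (hA : IsThetaHolder θ A)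
    (Abar : ℝ) (hAbar : IsErgMinValue T A Abar) :
    ∀ x : X,
      (x ∈ nonwanderingSet T A Abar ↔ manePotential T A Abar x x = 0) ∧
      (x ∈ nonwanderingSet T A Abar ↔ peierlsBarrier T A Abar x x = 0) := by
  intro x
  obtain ⟨lam, hlam0, hlam1, δ, hδ, hc⟩ := hT.contracting
  obtain ⟨ρ, hρ, hb⟩ := exists_hasContractingBranches hT.isOpenMap hT.cont hδ hc
  have hg : IsThetaHolder θ fun y => A y - Abar := by
    obtain ⟨C, hC, hCA⟩ := hA
    exact ⟨C, hC, fun y y' => by simpa using hCA y y'⟩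
  have hlow := loopSumsAlmostNonneg hb hρ hlam0.le hlam1 hθ0 hg hT.cont hδ hc
    fun k hk p hp => birkhoffSum_sub_nonneg_of_isPeriodicPt hT.cont.measurable hAbar.2 hk hp
  have hrep := loopsRepeatable hb hρ hlam0.le hlam1 hθ0 hg
  have hmane : 0 ≤ manePotential T A Abar x x := manePotential_self_nonneg hlow
  have hle := manePotential_le_peierlsBarrier T A Abar x x
  have hΩ := mem_nonwanderingSet_of_manePotential_self_nonpos (x := x) hlow
  have hpeierls := peierlsBarrier_self_nonpos (x := x) hrep
  exact ⟨⟨fun hx => le_antisymm (hle.trans (hpeierls hx)) hmane, fun h => hΩ h.le⟩,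
    ⟨fun hx => le_antisymm (hpeierls hx) (hmane.trans hle), fun h => hΩ (hle.trans h.le)⟩⟩

/-- `x ∈ Ω(A) ↔ φ_A(x, x) = 0 ↔ h_A(x, x) = 0`. -/
theorem nonwandering_iff_potential_zero {X : Type*} [MetricSpace X] [CompactSpace X] [Nonempty X]
    [MeasurableSpace X] [BorelSpace X]
    (T : X → X) (hT : IsExpandingTransitive T)
    (θ : ℝ) (hθ0 : 0 < θ) (hθ1 : θ ≤ 1)
    (A : X → ℝ) (hA : IsThetaHolder θ A)
    (Abar : ℝ) (hAbar : IsErgMinValue T A Abar) :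
    ∀ x : X,
      (x ∈ nonwanderingSet T A Abar ↔ manePotential T A Abar x x = 0) ∧
      (x ∈ nonwanderingSet T A Abar ↔ peierlsBarrier T A Abar x x = 0) :=
  nonwandering_iff_potential_zero_general T hT θ hθ0 A hA Abar hAbar
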